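/- The hanging equilibrium manifold H = {(R, 0) ∈ SO(3) × ℝ³ : Rᵀe₃ = ρ/‖ρ‖} of the 3D pendulum is Lyapunov stable: for every neighborhood U of H there is a neighborhood W of H such that solutions starting in W remain in U for all t ≥ 0. -/

import Mathlib

open Matrix

attribute [local instance] Matrix.frobeniusNormedAddCommGroup Matrix.frobeniusNormedSpace

noncomputable def hat (ω : Fin 3 → ℝ) : Matrix (Fin 3) (Fin 3) ℝ :=
  !![0, -ω 2, ω 1; ω 2, 0, -ω 0; -ω 1, ω 0, 0]

def SO3 : Set (Matrix (Fin 3) (Fin 3) ℝ) := {R | R * Rᵀ = 1 ∧ R.det = 1}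

noncomputable def e3 : Fin 3 → ℝ := ![0, 0, 1]

noncomputable def enorm3 (v : Fin 3 → ℝ) : ℝ := Real.sqrt (v ⬝ᵥ v)

/-!
The energy `V(R, ω) = ½ ωᵀJω + mg(‖ρ‖ − ρᵀRᵀe₃)` is conserved along solutions: the gyroscopic
term `Jω × ω` does no work, and the work of gravity cancels the change of the potential. On
`SO(3) × ℝ³` it is nonnegative, its zero set is exactly `H` (Cauchy–Schwarz, since `Rᵀe₃` is a
unit vector), and its sublevel sets are compact (`SO(3)` is compact and `J` is coercive). By
compactness every open `U ⊇ H` contains a sublevel set `{V ≤ ε}` of the energy, and the open set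
`{V < ε}` is the required `W`.
-/

open Set

theorem exists_sublevel_subset_of_isCompact {X : Type*} [TopologicalSpace X] {V : X → ℝ}
    {S U : Set X} {c : ℝ} (hV : Continuous V) (hc : 0 < c) (hK : IsCompact (S ∩ V ⁻¹' Iic c))
    (hU : IsOpen U) (hzero : S ∩ V ⁻¹' Iic 0 ⊆ U) : ∃ ε > 0, S ∩ V ⁻¹' Iic ε ⊆ U := by
  obtain hC | hC := ((S ∩ V ⁻¹' Iic c) \ U).eq_empty_or_nonempty
  · exact ⟨c, hc, sdiff_eq_empty.mp hC⟩
  obtain ⟨x, ⟨⟨hxS, -⟩, hxU⟩, hmin⟩ := (hK.diff hU).exists_isMinOn hC hV.continuousOn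
  have hVx : 0 < V x := lt_of_not_ge fun h => hxU (hzero ⟨hxS, h⟩)
  refine ⟨min c (V x / 2), lt_min hc (half_pos hVx), fun y ⟨hyS, (hyV : V y ≤ _)⟩ => ?_⟩
  by_contra hyU
  have hxy : V x ≤ V y := hmin ⟨⟨hyS, hyV.trans (min_le_left _ _)⟩, hyU⟩
  linarith [hyV.trans (min_le_right _ _)]

theorem exists_pos_mul_norm_sq_le_of_homogeneous {E : Type*} [NormedAddCommGroup E]
    [NormedSpace ℝ E] [ProperSpace E] [Nontrivial E] {q : E → ℝ} (hq : Continuous q)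
    (hhom : ∀ (c : ℝ) x, q (c • x) = c ^ 2 * q x) (hpos : ∀ x ≠ 0, 0 < q x) :
    ∃ μ > 0, ∀ x, μ * ‖x‖ ^ 2 ≤ q x := by
  obtain ⟨u, hu, hmin⟩ := (isCompact_sphere (0 : E) 1).exists_isMinOn
    (NormedSpace.sphere_nonempty.mpr zero_le_one) hq.continuousOn
  refine ⟨q u, hpos u (ne_zero_of_mem_unit_sphere ⟨u, hu⟩), fun x => ?_⟩
  rcases eq_or_ne x 0 with rfl | hx
  · simpa using (hhom 0 0).symm.le
  have hx1 : ‖x‖⁻¹ • x ∈ Metric.sphere (0 : E) 1 := by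
    simpa using norm_smul_inv_norm (𝕜 := ℝ) hx
  have hnx : ‖x‖ ≠ 0 := norm_ne_zero_iff.mpr hx
  calc q u * ‖x‖ ^ 2 ≤ q (‖x‖⁻¹ • x) * ‖x‖ ^ 2 := by gcongr; exact hmin hx1
    _ = q x := by rw [hhom]; field_simp

theorem Matrix.PosDef.exists_pos_mul_norm_sq_le {n : Type*} [Fintype n] [Nonempty n]
    {J : Matrix n n ℝ} (hJ : J.PosDef) : ∃ μ > 0, ∀ x, μ * ‖x‖ ^ 2 ≤ x ⬝ᵥ J *ᵥ x :=
  exists_pos_mul_norm_sq_le_of_homogeneous (by fun_prop)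
    (fun c x => by
      rw [mulVec_smul, dotProduct_smul, smul_dotProduct, smul_eq_mul, smul_eq_mul, ← mul_assoc, sq])
    fun x hx => by simpa using hJ.dotProduct_mulVec_pos hx

theorem dotProduct_transpose_mulVec_self {n α : Type*} [Fintype n] [DecidableEq n]
    [CommSemiring α] {R : Matrix n n α} (hR : R * Rᵀ = 1) (v : n → α) :
    Rᵀ *ᵥ v ⬝ᵥ Rᵀ *ᵥ v = v ⬝ᵥ v := by
  rw [dotProduct_mulVec, vecMul_transpose, mulVec_mulVec, hR, one_mulVec]

theorem dotProduct_self_nonneg {n R : Type*} [Fintype n] [Ring R] [LinearOrder R]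
    [IsStrictOrderedRing R] (v : n → R) : 0 ≤ v ⬝ᵥ v :=
  Finset.sum_nonneg fun i _ => mul_self_nonneg (v i)

section UnitVector

variable {ι : Type*} [Fintype ι] {ρ u : ι → ℝ}

theorem two_mul_sqrt_mul_sub_dotProduct (hu : u ⬝ᵥ u = 1) :
    2 * √(ρ ⬝ᵥ ρ) * (√(ρ ⬝ᵥ ρ) - ρ ⬝ᵥ u) =
      (√(ρ ⬝ᵥ ρ) • u - ρ) ⬝ᵥ (√(ρ ⬝ᵥ ρ) • u - ρ) := by
  have hr := Real.mul_self_sqrt (dotProduct_self_nonneg ρ)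
  simp only [sub_dotProduct, dotProduct_sub, smul_dotProduct, dotProduct_smul, smul_eq_mul, hu,
    dotProduct_comm u ρ]
  linear_combination hr

theorem sqrt_dotProduct_self_pos (hρ : ρ ≠ 0) : 0 < √(ρ ⬝ᵥ ρ) :=
  Real.sqrt_pos.mpr <| (dotProduct_self_nonneg ρ).lt_of_ne' (dotProduct_self_eq_zero.not.mpr hρ)

theorem dotProduct_le_sqrt_dotProduct_self (hu : u ⬝ᵥ u = 1) : ρ ⬝ᵥ u ≤ √(ρ ⬝ᵥ ρ) := by
  rcases eq_or_ne ρ 0 with rfl | hρ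
  · simp
  have hr := sqrt_dotProduct_self_pos hρ
  nlinarith [two_mul_sqrt_mul_sub_dotProduct (ρ := ρ) hu,
    dotProduct_self_nonneg (√(ρ ⬝ᵥ ρ) • u - ρ)]

theorem eq_inv_sqrt_smul_of_dotProduct_eq (hu : u ⬝ᵥ u = 1) (hρ : ρ ≠ 0)
    (h : ρ ⬝ᵥ u = √(ρ ⬝ᵥ ρ)) : u = (√(ρ ⬝ᵥ ρ))⁻¹ • ρ := by
  have := two_mul_sqrt_mul_sub_dotProduct (ρ := ρ) hu
  rw [h, sub_self, mul_zero, eq_comm, dotProduct_self_eq_zero, sub_eq_zero] at this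
  rwa [eq_inv_smul_iff₀ (sqrt_dotProduct_self_pos hρ).ne']

end UnitVector

section Derivatives

variable {𝕜 ι : Type*} [NontriviallyNormedField 𝕜] [Fintype ι] {t : 𝕜}

theorem HasDerivAt.dotProduct {u v : 𝕜 → ι → 𝕜} {u' v' : ι → 𝕜} (hu : HasDerivAt u u' t)
    (hv : HasDerivAt v v' t) : HasDerivAt (fun s => u s ⬝ᵥ v s) (u' ⬝ᵥ v t + u t ⬝ᵥ v') t := by
  have h := HasDerivAt.fun_sum (u := Finset.univ)
    fun i _ => (hasDerivAt_pi.mp hu i).fun_mul (hasDerivAt_pi.mp hv i)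
  rw [Finset.sum_add_distrib] at h
  exact h

theorem HasDerivAt.const_mulVec {κ : Type*} (A : Matrix κ ι 𝕜) {v : 𝕜 → ι → 𝕜} {v' : ι → 𝕜}
    (hv : HasDerivAt v v' t) : HasDerivAt (fun s => A *ᵥ v s) (A *ᵥ v') t :=
  hasDerivAt_pi.mpr fun i => by
    simpa [mulVec] using (hasDerivAt_const t fun j => A i j).dotProduct hv

theorem HasDerivAt.const_vecMul [CompleteSpace 𝕜] {κ : Type*} [Fintype κ] (v : κ → 𝕜)
    {M : 𝕜 → Matrix κ ι 𝕜} {M' : Matrix κ ι 𝕜} (hM : HasDerivAt M M' t) :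
    HasDerivAt (fun s => v ᵥ* M s) (v ᵥ* M') t := by
  have := (LinearMap.toContinuousLinearMap (vecMulBilin 𝕜 𝕜 v)).hasFDerivAt.comp_hasDerivAt t hM
  exact this

end Derivatives

theorem isClosed_SO3 : IsClosed SO3 :=
  (isClosed_eq (continuous_id.matrix_mul continuous_id.matrix_transpose) continuous_const).inter
    (isClosed_eq continuous_id.matrix_det continuous_const)

theorem isCompact_SO3 : IsCompact SO3 := by
  have hcube := isCompact_univ_pi fun _ : Fin 3 =>
    isCompact_univ_pi fun _ : Fin 3 => isCompact_Icc (a := (-1 : ℝ)) (b := 1)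
  refine hcube.of_isClosed_subset isClosed_SO3
    fun (R : Matrix (Fin 3) (Fin 3) ℝ) hR i _ j _ => abs_le.mp ?_
  have hU : R ∈ unitaryGroup (Fin 3) ℝ := by
    rw [mem_unitaryGroup_iff, star_eq_conjTranspose, conjTranspose_eq_transpose_of_trivial]
    exact hR.1
  simpa using entry_norm_bound_of_unitary hU i j

theorem transpose_mulVec_e3_self {R : Matrix (Fin 3) (Fin 3) ℝ} (hR : R ∈ SO3) :
    Rᵀ *ᵥ e3 ⬝ᵥ Rᵀ *ᵥ e3 = 1 := by
  rw [dotProduct_transpose_mulVec_self hR.1]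
  simp [e3, dotProduct, Fin.sum_univ_three]

theorem dotProduct_transpose_mulVec_e3_le_enorm3 {R : Matrix (Fin 3) (Fin 3) ℝ} (hR : R ∈ SO3)
    (ρ : Fin 3 → ℝ) : ρ ⬝ᵥ Rᵀ *ᵥ e3 ≤ enorm3 ρ :=
  dotProduct_le_sqrt_dotProduct_self (transpose_mulVec_e3_self hR)

theorem vecMul_hat (u ω : Fin 3 → ℝ) : u ᵥ* hat ω = u ⨯₃ ω := by
  ext i
  fin_cases i <;> simp [hat, vecMul, dotProduct, Fin.sum_univ_three, cross_apply] <;> ring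

noncomputable def pendulumEnergy (J : Matrix (Fin 3) (Fin 3) ℝ) (m g : ℝ) (ρ : Fin 3 → ℝ)
    (p : Matrix (Fin 3) (Fin 3) ℝ × (Fin 3 → ℝ)) : ℝ :=
  1 / 2 * (p.2 ⬝ᵥ J *ᵥ p.2) + m * g * (enorm3 ρ - ρ ⬝ᵥ p.1ᵀ *ᵥ e3)

theorem continuous_pendulumEnergy (J : Matrix (Fin 3) (Fin 3) ℝ) (m g : ℝ) (ρ : Fin 3 → ℝ) :
    Continuous (pendulumEnergy J m g ρ) := by
  unfold pendulumEnergy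
  fun_prop

section PendulumEnergy

variable {J : Matrix (Fin 3) (Fin 3) ℝ} {m g : ℝ} {ρ : Fin 3 → ℝ}

theorem pendulumEnergy_eq_zero {p : Matrix (Fin 3) (Fin 3) ℝ × (Fin 3 → ℝ)} (hω : p.2 = 0)
    (hR : p.1ᵀ *ᵥ e3 = (enorm3 ρ)⁻¹ • ρ) : pendulumEnergy J m g ρ p = 0 := by
  have hρρ : ρ ⬝ᵥ ρ = enorm3 ρ * enorm3 ρ := (Real.mul_self_sqrt (dotProduct_self_nonneg ρ)).symm
  rw [pendulumEnergy, hω, hR, dotProduct_smul, smul_eq_mul, hρρ, inv_mul_eq_div, mul_self_div_self]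
  simp

theorem eq_hanging_of_pendulumEnergy_nonpos (hJ : J.PosDef) (hmg : 0 < m * g) (hρ : ρ ≠ 0)
    {p : Matrix (Fin 3) (Fin 3) ℝ × (Fin 3 → ℝ)} (hp : p.1 ∈ SO3)
    (hV : pendulumEnergy J m g ρ p ≤ 0) : p.2 = 0 ∧ p.1ᵀ *ᵥ e3 = (enorm3 ρ)⁻¹ • ρ := by
  have hkin : 0 ≤ p.2 ⬝ᵥ J *ᵥ p.2 := by simpa using hJ.posSemidef.dotProduct_mulVec_nonneg p.2
  have hpot := dotProduct_transpose_mulVec_e3_le_enorm3 hp ρ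
  unfold pendulumEnergy at hV
  constructor
  · by_contra hω
    have := hJ.dotProduct_mulVec_pos hω
    simp only [star_trivial] at this
    nlinarith
  · have hpot0 : enorm3 ρ - ρ ⬝ᵥ p.1ᵀ *ᵥ e3 = 0 := by nlinarith
    exact eq_inv_sqrt_smul_of_dotProduct_eq (transpose_mulVec_e3_self hp) hρ
      (sub_eq_zero.mp hpot0).symm

theorem isCompact_pendulumEnergy_sublevel (hJ : J.PosDef) (hmg : 0 ≤ m * g) (c : ℝ) :
    IsCompact (Prod.fst ⁻¹' SO3 ∩ pendulumEnergy J m g ρ ⁻¹' Iic c) := by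
  obtain ⟨μ, hμ, hcoer⟩ := hJ.exists_pos_mul_norm_sq_le
  refine (isCompact_SO3.prod (isCompact_closedBall 0 √(2 * c / μ))).of_isClosed_subset
    ((isClosed_SO3.preimage continuous_fst).inter
      (isClosed_Iic.preimage (continuous_pendulumEnergy J m g ρ))) ?_
  rintro ⟨R, ω⟩ ⟨hR, hV : pendulumEnergy J m g ρ (R, ω) ≤ c⟩
  have hpot := dotProduct_transpose_mulVec_e3_le_enorm3 hR ρ
  refine ⟨hR, ?_⟩
  rw [mem_closedBall_zero_iff]
  refine Real.le_sqrt_of_sq_le ((le_div_iff₀ hμ).mpr ?_)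
  unfold pendulumEnergy at hV
  nlinarith [hcoer ω]

theorem hasDerivAt_pendulumEnergy_of_solution (hJ : J.IsSymm) {R : ℝ → Matrix (Fin 3) (Fin 3) ℝ}
    {ω : ℝ → Fin 3 → ℝ} {ω' : Fin 3 → ℝ} {t : ℝ} (hω : HasDerivAt ω ω' t)
    (hR : HasDerivAt R (R t * hat (ω t)) t)
    (hode : J *ᵥ ω' = (J *ᵥ ω t) ⨯₃ ω t + (m * g) • ρ ⨯₃ ((R t)ᵀ *ᵥ e3)) :
    HasDerivAt (fun s => pendulumEnergy J m g ρ (R s, ω s)) 0 t := by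
  have hkin := hω.dotProduct (hω.const_mulVec J)
  have hpot := (hasDerivAt_const t ρ).dotProduct (hR.const_vecMul e3)
  rw [zero_dotProduct, zero_add, ← vecMul_vecMul, vecMul_hat] at hpot
  simp_rw [← mulVec_transpose] at hpot
  have hsymm : ω' ⬝ᵥ J *ᵥ ω t = ω t ⬝ᵥ J *ᵥ ω' := by
    rw [dotProduct_mulVec, ← mulVec_transpose, hJ.eq, dotProduct_comm]
  have hwork : ω t ⬝ᵥ J *ᵥ ω' = m * g * (ρ ⬝ᵥ ((R t)ᵀ *ᵥ e3) ⨯₃ ω t) := by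
    rw [hode, dotProduct_add, dot_cross_self, dotProduct_smul, smul_eq_mul,
      triple_product_permutation, zero_add]
  refine ((hkin.const_mul (1 / 2)).fun_add
    ((hpot.const_sub (enorm3 ρ)).const_mul (m * g))).congr_deriv ?_
  rw [hsymm, hwork]
  ring

end PendulumEnergy

theorem hanging_manifold_stable_general
    (J : Matrix (Fin 3) (Fin 3) ℝ) (hJpos : J.PosDef)
    (m g : ℝ) (hm : 0 < m) (hg : 0 < g) (ρ : Fin 3 → ℝ) (hρ : ρ ≠ 0)
    (H : Set (Matrix (Fin 3) (Fin 3) ℝ × (Fin 3 → ℝ)))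
    (hH : H = {p | p.1 ∈ SO3 ∧ p.2 = 0 ∧ p.1ᵀ.mulVec e3 = (enorm3 ρ)⁻¹ • ρ}) :
    ∀ U : Set (Matrix (Fin 3) (Fin 3) ℝ × (Fin 3 → ℝ)), IsOpen U → H ⊆ U →
      ∃ W : Set (Matrix (Fin 3) (Fin 3) ℝ × (Fin 3 → ℝ)), IsOpen W ∧ H ⊆ W ∧
        ∀ (R : ℝ → Matrix (Fin 3) (Fin 3) ℝ) (ω ω' : ℝ → Fin 3 → ℝ),
          (∀ t, R t ∈ SO3) →
          (∀ t, HasDerivAt ω (ω' t) t) →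
          (∀ t, HasDerivAt R (R t * hat (ω t)) t) →
          (∀ t, J.mulVec (ω' t) =
            crossProduct (J.mulVec (ω t)) (ω t)
              + (m * g) • crossProduct ρ ((R t)ᵀ.mulVec e3)) →
          (R 0, ω 0) ∈ W →
          ∀ t : ℝ, 0 ≤ t → (R t, ω t) ∈ U := by
  subst hH
  intro U hU hHU
  have hmg : 0 < m * g := mul_pos hm hg
  have hV := continuous_pendulumEnergy J m g ρ
  obtain ⟨ε, hε, hsub⟩ := exists_sublevel_subset_of_isCompact hV one_pos
    (isCompact_pendulumEnergy_sublevel hJpos hmg.le 1) hU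
    fun p ⟨hp, hVp⟩ => hHU ⟨hp, eq_hanging_of_pendulumEnergy_nonpos hJpos hmg hρ hp hVp⟩
  refine ⟨pendulumEnergy J m g ρ ⁻¹' Iio ε, isOpen_Iio.preimage hV,
    fun p ⟨_, hω, hR⟩ => by simpa [pendulumEnergy_eq_zero hω hR] using hε, ?_⟩
  intro R ω ω' hSO3 hω hR hode hW t _
  have hJ : J.IsSymm := isHermitian_iff_isSymm.mp hJpos.isHermitian
  have hderiv s := hasDerivAt_pendulumEnergy_of_solution hJ (hω s) (hR s) (hode s)
  have hconst := is_const_of_deriv_eq_zero (fun s => (hderiv s).differentiableAt)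
    (fun s => (hderiv s).deriv) t 0
  exact hsub ⟨hSO3 t, (hconst.trans_lt hW).le⟩

/-- The hanging equilibrium manifold `H = {(R,0) : R ∈ SO(3), Rᵀe₃ = ρ/‖ρ‖}` is
Lyapunov stable for the 3D pendulum dynamics: every neighborhood `U` of `H`
contains a neighborhood `W` of `H` such that every solution starting in `W`
(with attitude in `SO(3)`) stays in `U` for all `t ≥ 0`. -/
theorem hanging_manifold_stable
    (J : Matrix (Fin 3) (Fin 3) ℝ) (hJsymm : J.IsSymm) (hJpos : J.PosDef)
    (m g : ℝ) (hm : 0 < m) (hg : 0 < g) (ρ : Fin 3 → ℝ) (hρ : ρ ≠ 0)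
    (H : Set (Matrix (Fin 3) (Fin 3) ℝ × (Fin 3 → ℝ)))
    (hH : H = {p | p.1 ∈ SO3 ∧ p.2 = 0 ∧ p.1ᵀ.mulVec e3 = (enorm3 ρ)⁻¹ • ρ}) :
    ∀ U : Set (Matrix (Fin 3) (Fin 3) ℝ × (Fin 3 → ℝ)), IsOpen U → H ⊆ U →
      ∃ W : Set (Matrix (Fin 3) (Fin 3) ℝ × (Fin 3 → ℝ)), IsOpen W ∧ H ⊆ W ∧
        ∀ (R : ℝ → Matrix (Fin 3) (Fin 3) ℝ) (ω ω' : ℝ → Fin 3 → ℝ),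
          (∀ t, R t ∈ SO3) →
          (∀ t, HasDerivAt ω (ω' t) t) →
          (∀ t, HasDerivAt R (R t * hat (ω t)) t) →
          (∀ t, J.mulVec (ω' t) =
            crossProduct (J.mulVec (ω t)) (ω t)
              + (m * g) • crossProduct ρ ((R t)ᵀ.mulVec e3)) →
          (R 0, ω 0) ∈ W →
          ∀ t : ℝ, 0 ≤ t → (R t, ω t) ∈ U :=
  hanging_manifold_stable_general J hJpos m g hm hg ρ hρ H hH
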